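/- arXiv:2107.09925 — 3 statements merged into one kernel-verified Lean document; each statement's English description precedes it below -/
import Mathlib

section
/- Let a > 0 and suppose s : [0,∞) → ℝ is C², bounded, satisfies a² s'' - s = -σ on (0,∞) for a given continuous bounded σ, and additionally satisfies s(0) - a s'(0) = 0. Then s coincides with the integral transform: s(x) = (1/(2a)) ∫₀^∞ e^{-|x-x'|/a} σ(x') dx' for all x ≥ 0. -/
open Real MeasureTheory

/-- Converse direction: a C², bounded solution of `a²s'' - s = -σ` on `(0,∞)` with
`s(0) - a s'(0) = 0` coincides with the Eringen integral transform of `σ` on `[0,∞)`. -/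
theorem stmt_8 (a : ℝ) (ha : 0 < a) (s σ : ℝ → ℝ)
    (hs : ContDiff ℝ 2 s)
    (hsbdd : ∃ M, ∀ x ∈ Set.Ici (0 : ℝ), |s x| ≤ M)
    (hσ : Continuous σ)
    (hσbdd : ∃ M, ∀ x ∈ Set.Ici (0 : ℝ), |σ x| ≤ M)
    (hode : ∀ x : ℝ, 0 < x → a ^ 2 * deriv (deriv s) x - s x = -σ x)
    (hbc : s 0 - a * deriv s 0 = 0) :
    ∀ x : ℝ, 0 ≤ x →
      s x = (1 / (2 * a)) * ∫ x' in Set.Ioi (0 : ℝ),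
        Real.exp (-|x - x'| / a) * σ x' := by
  obtain ⟨M, hM⟩ := hsbdd
  obtain ⟨N, hN⟩ := hσbdd
  -- regularity facts
  have h2 : ContDiff ℝ ((1:ℕ) + 1) s := by exact_mod_cast hs
  have hds1 : ContDiff ℝ 1 (deriv s) := (contDiff_succ_iff_deriv.mp h2).2.2
  have hdiff : Differentiable ℝ s := (contDiff_succ_iff_deriv.mp h2).1
  have hdiff' : Differentiable ℝ (deriv s) := hds1.differentiable one_ne_zero
  have hcs' : Continuous (deriv s) := hdiff'.continuous
  have hcs'' : Continuous (deriv (deriv s)) := (contDiff_succ_iff_deriv.mp (by exact_mod_cast hds1 : ContDiff ℝ ((0:ℕ)+1) (deriv s))).2.2.continuous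
  have hcs : Continuous s := hdiff.continuous
  set u : ℝ → ℝ := fun x => Real.exp (x / a) * (s x - a * deriv s x) with hu_def
  set v : ℝ → ℝ := fun x => Real.exp (-x / a) * (s x + a * deriv s x) with hv_def
  have hU : ∀ x : ℝ, 0 < x → HasDerivAt u (Real.exp (x / a) * σ x / a) x := by
    intro x hx
    have he : HasDerivAt (fun x : ℝ => Real.exp (x / a)) (Real.exp (x / a) * (1 / a)) x :=
      by have := (Real.hasDerivAt_exp (x / a)).comp x ((hasDerivAt_id x).div_const a); exact this
    have hg : HasDerivAt (fun x => s x - a * deriv s x)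
        (deriv s x - a * deriv (deriv s) x) x :=
      ((hdiff x).hasDerivAt).sub (((hdiff' x).hasDerivAt).const_mul a)
    have := he.mul hg
    convert this using 1
    · rfl
    · rfl
    · rfl
    have hode' := hode x hx
    have : deriv (deriv s) x = (s x - σ x) / a ^ 2 := by
      field_simp at hode' ⊢; linarith
    rw [this]; field_simp; ring
  have hV : ∀ x : ℝ, 0 < x → HasDerivAt v (-(Real.exp (-x / a) * σ x / a)) x := by
    intro x hx
    have he : HasDerivAt (fun x : ℝ => Real.exp (-x / a)) (Real.exp (-x / a) * (-1 / a)) x :=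
      by have := (Real.hasDerivAt_exp (-x / a)).comp x (((hasDerivAt_id x).neg).div_const a); exact this
    have hg : HasDerivAt (fun x => s x + a * deriv s x)
        (deriv s x + a * deriv (deriv s) x) x :=
      ((hdiff x).hasDerivAt).add (((hdiff' x).hasDerivAt).const_mul a)
    have := he.mul hg
    convert this using 1
    · rfl
    · rfl
    · rfl
    have hode' := hode x hx
    have : deriv (deriv s) x = (s x - σ x) / a ^ 2 := by
      field_simp at hode' ⊢; linarith
    rw [this]; field_simp; ring
  have hucont : Continuous u := ((Real.continuous_exp.comp (continuous_id.div_const a))).mul (hcs.sub (continuous_const.mul hcs'))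
  have hvcont : Continuous v := ((Real.continuous_exp.comp (continuous_id.neg.div_const a))).mul (hcs.add (continuous_const.mul hcs'))
  -- FTC for u
  have hu0 : u 0 = 0 := by
    have h0 : s 0 = a * deriv s 0 := by linarith
    simp [hu_def, h0]
  have huint : ∀ x : ℝ, 0 ≤ x → u x = ∫ t in (0:ℝ)..x, Real.exp (t / a) * σ t / a := by
    intro x hx
    have := intervalIntegral.integral_eq_sub_of_hasDeriv_right_of_le hx
      (hucont.continuousOn)
      (fun t ht => (hU t ht.1).hasDerivWithinAt)
      ((by fun_prop : Continuous fun t : ℝ => Real.exp (t / a) * σ t / a).intervalIntegrable _ _)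
    rw [this, hu0, sub_zero]
  -- FTC for v
  have hvint : ∀ x y : ℝ, 0 ≤ x → x ≤ y →
      v y - v x = ∫ t in x..y, -(Real.exp (-t / a) * σ t / a) := by
    intro x y hx hxy
    refine (intervalIntegral.integral_eq_sub_of_hasDeriv_right_of_le hxy
      (hvcont.continuousOn)
      (fun t ht => (hV t (lt_of_le_of_lt hx ht.1)).hasDerivWithinAt)
      ((by fun_prop : Continuous fun t : ℝ => -(Real.exp (-t / a) * σ t / a)).intervalIntegrable _ _)).symm
  -- linear bound on deriv s
  set C : ℝ := (M + N) / a ^ 2 with hC_def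
  have hM0 : 0 ≤ M := le_trans (abs_nonneg _) (hM 0 Set.self_mem_Ici)
  have hN0 : 0 ≤ N := le_trans (abs_nonneg _) (hN 0 Set.self_mem_Ici)
  have hderiv_bd : ∀ y : ℝ, 0 ≤ y → |deriv s y| ≤ |deriv s 0| + C * y := by
    intro y hy
    have hftc : ∫ t in (0:ℝ)..y, deriv (deriv s) t = deriv s y - deriv s 0 :=
      intervalIntegral.integral_eq_sub_of_hasDerivAt
        (fun t _ => (hdiff' t).hasDerivAt) (hcs''.intervalIntegrable _ _)
    have hbound : |deriv s y - deriv s 0| ≤ C * |y - 0| := by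
      rw [← hftc, ← Real.norm_eq_abs]
      refine intervalIntegral.norm_integral_le_of_norm_le_const fun t ht => ?_
      rw [Set.uIoc_of_le hy] at ht
      have ht0 : 0 < t := ht.1
      have hode' := hode t ht0
      have : deriv (deriv s) t = (s t - σ t) / a ^ 2 := by
        field_simp at hode' ⊢; linarith
      rw [Real.norm_eq_abs, this, abs_div, abs_of_pos (pow_pos ha 2), hC_def]
      gcongr
      calc |s t - σ t| ≤ |s t| + |σ t| := abs_sub _ _
        _ ≤ M + N := add_le_add (hM t ht0.le) (hN t ht0.le)
    rw [sub_zero, abs_of_nonneg hy] at hbound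
    calc |deriv s y| ≤ |deriv s 0| + |deriv s y - deriv s 0| := by
          have := abs_add_le (deriv s 0) (deriv s y - deriv s 0); simpa using this
      _ ≤ |deriv s 0| + C * y := by linarith
  -- v tends to 0 at infinity
  have hvlim : Filter.Tendsto v Filter.atTop (nhds 0) := by
    have hbd : ∀ᶠ y in Filter.atTop, ‖v y‖ ≤
        (M + a * |deriv s 0|) * Real.exp (-(y / a)) + (a * a * C) * ((y / a) * Real.exp (-(y / a))) := by
      filter_upwards [Filter.eventually_ge_atTop (0:ℝ)] with y hy
      have h1 : |s y + a * deriv s y| ≤ M + a * (|deriv s 0| + C * y) := by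
        calc |s y + a * deriv s y| ≤ |s y| + a * |deriv s y| := by
              rw [← abs_of_pos ha, ← abs_mul, abs_of_pos ha]
              exact abs_add_le _ _
          _ ≤ M + a * (|deriv s 0| + C * y) := by
              have := hderiv_bd y hy
              have := hM y hy
              nlinarith [ha.le]
      have : ‖v y‖ = Real.exp (-y / a) * |s y + a * deriv s y| := by
        rw [hv_def]; simp [abs_mul, abs_of_pos (Real.exp_pos _)]
      rw [this]
      have hexp : Real.exp (-y / a) = Real.exp (-(y / a)) := by ring_nf
      rw [hexp]
      have hC0 : 0 ≤ C := div_nonneg (by linarith) (pow_pos ha 2).le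
      have hep : 0 < Real.exp (-(y / a)) := Real.exp_pos _
      have key : a * a * C * (y / a * Real.exp (-(y / a)))
          = a * C * y * Real.exp (-(y / a)) := by field_simp
      nlinarith [mul_le_mul_of_nonneg_left h1 hep.le, key]
    have hlim1 : Filter.Tendsto (fun y : ℝ => Real.exp (-(y / a))) Filter.atTop (nhds 0) :=
      Real.tendsto_exp_neg_atTop_nhds_zero.comp (Filter.tendsto_id.atTop_div_const ha)
    have hlim2 : Filter.Tendsto (fun y : ℝ => (y / a) * Real.exp (-(y / a))) Filter.atTop (nhds 0) := by
      have := (Real.tendsto_pow_mul_exp_neg_atTop_nhds_zero 1).comp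
        (Filter.tendsto_id.atTop_div_const ha)
      simpa [Function.comp_def] using this
    have := ((hlim1.const_mul (M + a * |deriv s 0|)).add (hlim2.const_mul (a * a * C)))
    simp only [mul_zero, add_zero] at this
    exact squeeze_zero_norm' hbd this
  -- v x equals the tail integral
  have hIOn : ∀ x : ℝ, 0 ≤ x →
      IntegrableOn (fun t => Real.exp (-t / a) * σ t / a) (Set.Ioi x) := by
    intro x hx
    have hg : IntegrableOn (fun t : ℝ => (N / a) * Real.exp (-(1 / a) * t)) (Set.Ioi x) :=
      (exp_neg_integrableOn_Ioi x (by positivity)).const_mul _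
    refine hg.mono' ((by fun_prop : Continuous fun t : ℝ =>
      Real.exp (-t / a) * σ t / a).aestronglyMeasurable.restrict) ?_
    filter_upwards [ae_restrict_mem measurableSet_Ioi] with t ht
    have ht0 : (0:ℝ) ≤ t := le_trans hx (le_of_lt ht)
    have : ‖Real.exp (-t / a) * σ t / a‖ = Real.exp (-t / a) * |σ t| / a := by
      rw [Real.norm_eq_abs, abs_div, abs_mul, abs_of_pos (Real.exp_pos _), abs_of_pos ha]
    rw [this]
    have hexp : Real.exp (-t / a) = Real.exp (-(1 / a) * t) := by ring_nf
    rw [hexp]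
    have := hN t ht0
    have hep := (Real.exp_pos (-(1 / a) * t)).le
    rw [div_le_iff₀ ha, mul_comm (N / a)]
    calc Real.exp (-(1/a)*t) * |σ t| ≤ Real.exp (-(1/a)*t) * N := by gcongr
      _ = Real.exp (-(1/a)*t) * (N / a) * a := by field_simp
  have hvx : ∀ x : ℝ, 0 ≤ x →
      v x = ∫ t in Set.Ioi x, Real.exp (-t / a) * σ t / a := by
    intro x hx
    set I := ∫ t in Set.Ioi x, Real.exp (-t / a) * σ t / a with hI
    have T1 : Filter.Tendsto (fun y => ∫ t in x..y, Real.exp (-t / a) * σ t / a)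
        Filter.atTop (nhds I) :=
      intervalIntegral_tendsto_integral_Ioi x (hIOn x hx) Filter.tendsto_id
    have T2 : Filter.Tendsto (fun y => v x - ∫ t in x..y, Real.exp (-t / a) * σ t / a)
        Filter.atTop (nhds (v x - I)) := tendsto_const_nhds.sub T1
    have heq : ∀ᶠ y in Filter.atTop,
        (v x - ∫ t in x..y, Real.exp (-t / a) * σ t / a) = v y := by
      filter_upwards [Filter.eventually_ge_atTop x] with y hy
      have := hvint x y hx hy
      rw [intervalIntegral.integral_neg] at this
      linarith
    have T3 : Filter.Tendsto v Filter.atTop (nhds (v x - I)) := T2.congr' heq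
    have : v x - I = 0 := tendsto_nhds_unique T3 hvlim
    linarith
  -- final assembly
  intro x hx
  set f : ℝ → ℝ := fun t => Real.exp (-|x - t| / a) * σ t with hf_def
  have hfc : Continuous f := by
    apply Continuous.mul _ hσ
    exact Real.continuous_exp.comp ((continuous_abs.comp (continuous_const.sub continuous_id)).neg.div_const a)
  have hfIoc : IntegrableOn f (Set.Ioc 0 x) := hfc.integrableOn_Ioc
  have hfIoi : IntegrableOn f (Set.Ioi x) := by
    have hg : IntegrableOn (fun t : ℝ => (N * Real.exp (x / a)) * Real.exp (-(1 / a) * t))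
        (Set.Ioi x) := (exp_neg_integrableOn_Ioi x (by positivity)).const_mul _
    refine hg.mono' (hfc.aestronglyMeasurable.restrict) ?_
    filter_upwards [ae_restrict_mem measurableSet_Ioi] with t ht
    have htx : x < t := Set.mem_Ioi.mp ht
    have ht0 : (0:ℝ) ≤ t := le_trans hx htx.le
    have habs : |x - t| = t - x := by rw [abs_of_nonpos (by linarith)]; ring
    have hnm : ‖f t‖ = Real.exp (-(t - x) / a) * |σ t| := by
      rw [hf_def]; simp only [Real.norm_eq_abs, abs_mul, abs_of_pos (Real.exp_pos _), habs]
    rw [hnm]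
    have hes : Real.exp (-(t - x) / a) = Real.exp (x / a) * Real.exp (-(1/a) * t) := by
      rw [← Real.exp_add]; congr 1; field_simp; ring
    rw [hes]
    have := hN t ht0
    have hep := (Real.exp_pos (-(1/a) * t)).le
    have hex := (Real.exp_pos (x / a)).le
    nlinarith [mul_le_mul_of_nonneg_left this (mul_nonneg hex hep)]
  have hsplit : ∫ t in Set.Ioi (0:ℝ), f t
      = (∫ t in Set.Ioc 0 x, f t) + ∫ t in Set.Ioi x, f t := by
    rw [← Set.Ioc_union_Ioi_eq_Ioi hx]
    exact setIntegral_union (Set.Ioc_disjoint_Ioi le_rfl) measurableSet_Ioi hfIoc hfIoi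
  have h1 : Real.exp (-x / a) * u x = (1/a) * ∫ t in Set.Ioc 0 x, f t := by
    rw [← intervalIntegral.integral_of_le hx]
    have e2 : ∫ t in (0:ℝ)..x, f t
        = ∫ t in (0:ℝ)..x, a * (Real.exp (-x/a) * (Real.exp (t/a) * σ t / a)) := by
      apply intervalIntegral.integral_congr
      intro t ht
      rw [Set.uIcc_of_le hx] at ht
      have habs : |x - t| = x - t := abs_of_nonneg (by linarith [ht.2])
      rw [hf_def]
      simp only [habs]
      rw [show (-(x - t)/a) = (-x/a + t/a) by ring, Real.exp_add]
      field_simp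
    rw [e2, intervalIntegral.integral_const_mul, intervalIntegral.integral_const_mul,
      huint x hx]
    field_simp
  have h2 : Real.exp (x / a) * v x = (1/a) * ∫ t in Set.Ioi x, f t := by
    have e3 : ∫ t in Set.Ioi x, f t
        = ∫ t in Set.Ioi x, a * (Real.exp (x/a) * (Real.exp (-t/a) * σ t / a)) := by
      apply setIntegral_congr_fun measurableSet_Ioi
      intro t ht
      have htx : x < t := Set.mem_Ioi.mp ht
      have habs : |x - t| = t - x := by rw [abs_of_nonpos (by linarith)]; ring
      simp only [hf_def, habs]
      rw [show (-(t - x)/a) = (x/a + -t/a) by ring, Real.exp_add]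
      field_simp
    rw [e3, integral_const_mul, integral_const_mul, hvx x hx]
    field_simp
  have hee : Real.exp (-x/a) * Real.exp (x/a) = 1 := by
    rw [← Real.exp_add]
    norm_num [neg_div]
  have hsum : 2 * s x = Real.exp (-x / a) * u x + Real.exp (x / a) * v x := by
    simp only [hu_def, hv_def]
    linear_combination (-(2 * s x)) * hee
  rw [hsplit]
  have hkey : 1 / (2 * a) * ((∫ t in Set.Ioc 0 x, f t) + ∫ t in Set.Ioi x, f t)
      = (1/2) * ((1/a) * (∫ t in Set.Ioc 0 x, f t) + (1/a) * ∫ t in Set.Ioi x, f t) := by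
    ring
  rw [hkey, ← h1, ← h2]
  linarith [hsum]
end

section
/- Let c₂ > 0, a > 0, and 0 < K < 2 with K = a k. The surface wave dispersion relation: u(x₁,x₂,t) = U e^{ik(x₁ - ct) - kγ x₂} with γ = √(1 - c²/c₂²) satisfies both the wave equation ∂²u/∂x₁² + ∂²u/∂x₂² = (1/c₂²) ∂²u/∂t² and the effective boundary condition ∂u/∂x₂ - (a/2) ∂²u/∂x₁² = 0 at x₂ = 0 (for U ≠ 0) if and only if c/c₂ = √(1 - K²/4). -/
open Real Complex

lemma hasDeriv_mul_exp (C α β : ℂ) (x : ℝ) :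
    HasDerivAt (fun y : ℝ => C * Complex.exp (α * y + β)) (C * α * Complex.exp (α * x + β)) x := by
  have h0 : HasDerivAt (fun y : ℝ => (y : ℂ)) 1 x := by
    simpa using (hasDerivAt_id x).ofReal_comp
  have h1 : HasDerivAt (fun y : ℝ => α * (y : ℂ) + β) α x := by
    simpa using (h0.const_mul α).add_const β
  have h2 := h1.cexp
  simpa [mul_comm, mul_assoc, mul_left_comm] using h2.const_mul C

lemma d1 (C α β : ℂ) (x : ℝ) :
    deriv (fun y : ℝ => C * Complex.exp (α * y + β)) x = C * α * Complex.exp (α * x + β) :=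
  (hasDeriv_mul_exp C α β x).deriv

lemma d2 (C α β : ℂ) (x : ℝ) :
    deriv (fun y => deriv (fun y' : ℝ => C * Complex.exp (α * y' + β)) y) x
      = C * α ^ 2 * Complex.exp (α * x + β) := by
  have h : (fun y => deriv (fun y' : ℝ => C * Complex.exp (α * y' + β)) y)
      = fun y : ℝ => (C * α) * Complex.exp (α * y + β) := funext fun y => d1 C α β y
  rw [h, d1]; ring

/-- The surface-wave ansatz `u = U e^{ik(x₁-ct) - kγx₂}` with `γ = √(1-c²/c₂²)` satisfies
both the wave equation and the effective boundary condition
`∂u/∂x₂ - (a/2)∂²u/∂x₁² = 0` at `x₂ = 0` iff `c/c₂ = √(1 - K²/4)`, `K = ak`. -/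
theorem stmt_12 (a c c₂ k γ K : ℝ) (U : ℂ)
    (ha : 0 < a) (hc₂ : 0 < c₂) (hk : 0 < k) (hc : 0 < c) (hcc : c < c₂)
    (hK : K = a * k) (hK0 : 0 < K) (hK2 : K < 2)
    (hγ : γ = Real.sqrt (1 - c ^ 2 / c₂ ^ 2)) (hU : U ≠ 0)
    (u : ℝ → ℝ → ℝ → ℂ)
    (hu : ∀ x₁ x₂ t : ℝ, u x₁ x₂ t =
      U * Complex.exp (Complex.I * (k * (x₁ - c * t)) - (k * γ * x₂ : ℝ))) :
    ((∀ x₁ x₂ t : ℝ,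
        deriv (fun y => deriv (fun y' => u y' x₂ t) y) x₁ +
        deriv (fun y => deriv (fun y' => u x₁ y' t) y) x₂ =
        (1 / c₂ ^ 2 : ℝ) * deriv (fun s => deriv (fun s' => u x₁ x₂ s') s) t) ∧
      (∀ x₁ t : ℝ,
        deriv (fun y => u x₁ y t) 0 -
        (a / 2 : ℝ) * deriv (fun y => deriv (fun y' => u y' 0 t) y) x₁ = 0)) ↔
    c / c₂ = Real.sqrt (1 - K ^ 2 / 4) := by
  have hcle : (0:ℝ) ≤ 1 - c ^ 2 / c₂ ^ 2 := by
    have : c ^ 2 ≤ c₂ ^ 2 := by nlinarith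
    have h2 : c₂ ^ 2 > 0 := by positivity
    rw [sub_nonneg, div_le_one h2]; exact this
  have hγ2 : γ ^ 2 = 1 - c ^ 2 / c₂ ^ 2 := by rw [hγ]; exact Real.sq_sqrt hcle
  have hγ0 : 0 ≤ γ := hγ ▸ Real.sqrt_nonneg _
  -- second derivative in x₁
  have hA : ∀ x₁ x₂ t : ℝ, deriv (fun y => deriv (fun y' => u y' x₂ t) y) x₁
      = U * (Complex.I * k) ^ 2 *
        Complex.exp (Complex.I * (k * (x₁ - c * t)) - (k * γ * x₂ : ℝ)) := by
    intro x₁ x₂ t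
    have hfun : (fun y' : ℝ => u y' x₂ t)
        = fun y' : ℝ => U * Complex.exp ((Complex.I * k) * y'
            + (-(Complex.I * (k * c * t)) - (k * γ * x₂ : ℝ))) := by
      funext y'; rw [hu]; congr 1; push_cast; ring
    rw [show (fun y => deriv (fun y' => u y' x₂ t) y)
        = fun y => deriv (fun y' : ℝ => U * Complex.exp ((Complex.I * k) * y'
            + (-(Complex.I * (k * c * t)) - (k * γ * x₂ : ℝ)))) y from
      funext fun y => by rw [hfun], d2]
    congr 1; push_cast; ring
  -- second derivative in x₂
  have hB : ∀ x₁ x₂ t : ℝ, deriv (fun y => deriv (fun y' => u x₁ y' t) y) x₂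
      = U * (-(k * γ) : ℂ) ^ 2 *
        Complex.exp (Complex.I * (k * (x₁ - c * t)) - (k * γ * x₂ : ℝ)) := by
    intro x₁ x₂ t
    have hfun : (fun y' : ℝ => u x₁ y' t)
        = fun y' : ℝ => U * Complex.exp ((-(k * γ) : ℂ) * y'
            + Complex.I * (k * (x₁ - c * t))) := by
      funext y'; rw [hu]; congr 1; push_cast; ring
    rw [show (fun y => deriv (fun y' => u x₁ y' t) y)
        = fun y => deriv (fun y' : ℝ => U * Complex.exp ((-(k * γ) : ℂ) * y'
            + Complex.I * (k * (x₁ - c * t)))) y from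
      funext fun y => by rw [hfun], d2]
    congr 1; push_cast; ring
  -- second derivative in t
  have hC : ∀ x₁ x₂ t : ℝ, deriv (fun s => deriv (fun s' => u x₁ x₂ s') s) t
      = U * (-(Complex.I * (k * c))) ^ 2 *
        Complex.exp (Complex.I * (k * (x₁ - c * t)) - (k * γ * x₂ : ℝ)) := by
    intro x₁ x₂ t
    have hfun : (fun s' : ℝ => u x₁ x₂ s')
        = fun s' : ℝ => U * Complex.exp ((-(Complex.I * (k * c))) * s'
            + (Complex.I * (k * x₁) - (k * γ * x₂ : ℝ))) := by
      funext s'; rw [hu]; congr 1; push_cast; ring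
    rw [show (fun s => deriv (fun s' => u x₁ x₂ s') s)
        = fun s => deriv (fun s' : ℝ => U * Complex.exp ((-(Complex.I * (k * c))) * s'
            + (Complex.I * (k * x₁) - (k * γ * x₂ : ℝ)))) s from
      funext fun s => by rw [hfun], d2]
    congr 1; push_cast; ring
  -- first derivative in x₂ at 0
  have hD : ∀ x₁ t : ℝ, deriv (fun y => u x₁ y t) 0
      = U * (-(k * γ) : ℂ) *
        Complex.exp (Complex.I * (k * (x₁ - c * t)) - (k * γ * (0:ℝ) : ℝ)) := by
    intro x₁ t
    have hfun : (fun y : ℝ => u x₁ y t)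
        = fun y : ℝ => U * Complex.exp ((-(k * γ) : ℂ) * y
            + Complex.I * (k * (x₁ - c * t))) := by
      funext y; rw [hu]; congr 1; push_cast; ring
    rw [hfun, d1]
    congr 1; push_cast; ring
  have hexp : ∀ x₁ x₂ t : ℝ,
      Complex.exp (Complex.I * (k * (x₁ - c * t)) - (k * γ * x₂ : ℝ)) ≠ 0 :=
    fun _ _ _ => Complex.exp_ne_zero _
  -- the wave equation always holds
  have hwave : ∀ x₁ x₂ t : ℝ,
      deriv (fun y => deriv (fun y' => u y' x₂ t) y) x₁ +
        deriv (fun y => deriv (fun y' => u x₁ y' t) y) x₂ =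
        (1 / c₂ ^ 2 : ℝ) * deriv (fun s => deriv (fun s' => u x₁ x₂ s') s) t := by
    intro x₁ x₂ t
    rw [hA, hB, hC]
    have hγ2C : (γ:ℂ)^2 = 1 - (c:ℂ)^2 / (c₂:ℂ)^2 := by exact_mod_cast hγ2
    have e1 : (Complex.I * k) ^ 2 = -((k:ℂ)^2) := by
      rw [mul_pow, Complex.I_sq]; ring
    have e2 : (-(Complex.I * ((k:ℂ) * c))) ^ 2 = -((k:ℂ)^2 * (c:ℂ)^2) := by
      rw [show (-(Complex.I * ((k:ℂ) * c))) ^ 2 = Complex.I ^ 2 * ((k:ℂ) * c) ^ 2 by ring,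
        Complex.I_sq]; ring
    have e3 : ((-(k * γ) : ℂ)) ^ 2 = (k:ℂ)^2 * (1 - (c:ℂ)^2 / (c₂:ℂ)^2) := by
      rw [show ((-(k * γ) : ℂ)) ^ 2 = (k:ℂ)^2 * (γ:ℂ)^2 by push_cast; ring, hγ2C]
    rw [e1, e2, e3]
    have hc₂0 : (c₂ : ℂ) ≠ 0 := by exact_mod_cast hc₂.ne'
    push_cast
    field_simp
    ring
  -- the boundary condition ↔ γ = K/2
  have hbc_iff : (∀ x₁ t : ℝ,
      deriv (fun y => u x₁ y t) 0 -
        (a / 2 : ℝ) * deriv (fun y => deriv (fun y' => u y' 0 t) y) x₁ = 0) ↔ γ = K / 2 := by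
    constructor
    · intro h
      have h0 := h 0 0
      rw [hD, hA] at h0
      have hI : (Complex.I * k) ^ 2 = -((k:ℂ)^2) := by
        rw [mul_pow, Complex.I_sq]; ring
      rw [hI] at h0
      have hE := hexp 0 0 0
      have hc' : U * Complex.exp (Complex.I * ((k:ℂ) * ((0:ℝ) - (c:ℂ) * (0:ℝ))) - ((k * γ * 0 : ℝ) : ℂ))
          * ((-(k * γ) : ℂ) + ((a : ℂ) / 2) * (k:ℂ)^2) = 0 := by
        push_cast at h0 ⊢
        linear_combination h0
      have hcoef : (-(k * γ) : ℂ) + ((a : ℂ) / 2) * (k:ℂ)^2 = 0 :=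
        (mul_eq_zero.mp hc').resolve_left (mul_ne_zero hU (by push_cast at hE ⊢; exact hE))
      have hreal : -(k * γ) + a / 2 * k ^ 2 = 0 := by exact_mod_cast hcoef
      have h1 : k * γ = k * (a * k / 2) := by linear_combination (-1 : ℝ) * hreal
      have h2 : γ = a * k / 2 := mul_left_cancel₀ hk.ne' h1
      rw [hK]; exact h2
    · intro h
      intro x₁ t
      rw [hD, hA]
      have hI : (Complex.I * k) ^ 2 = -((k:ℂ)^2) := by
        rw [mul_pow, Complex.I_sq]; ring
      rw [hI]
      have : (γ : ℂ) = (K : ℂ) / 2 := by exact_mod_cast h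
      rw [show (k * γ * (0:ℝ) : ℝ) = (0:ℝ) by ring]
      push_cast [hK] at this ⊢
      rw [this]
      ring
  rw [iff_def]
  constructor
  · rintro ⟨_, hbc⟩
    have hγK : γ = K / 2 := hbc_iff.mp hbc
    have hγsq : γ ^ 2 = K ^ 2 / 4 := by rw [hγK]; ring
    have h3 : c ^ 2 / c₂ ^ 2 = 1 - K ^ 2 / 4 := by linarith [hγ2, hγsq]
    have hcc2 : (c / c₂) ^ 2 = 1 - K ^ 2 / 4 := by rw [div_pow]; exact h3
    rw [← hcc2, Real.sqrt_sq (by positivity : (0:ℝ) ≤ c / c₂)]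
  · intro h
    refine ⟨hwave, hbc_iff.mpr ?_⟩
    have h14 : (0:ℝ) ≤ 1 - K ^ 2 / 4 := by nlinarith
    have hcc2 : (c / c₂) ^ 2 = 1 - K ^ 2 / 4 := by
      rw [h, Real.sq_sqrt h14]
    rw [div_pow] at hcc2
    have hγ2' : γ ^ 2 = K ^ 2 / 4 := by linarith [hγ2, hcc2]
    calc γ = Real.sqrt (γ ^ 2) := (Real.sqrt_sq hγ0).symm
      _ = K / 2 := by
          rw [hγ2', show K ^ 2 / 4 = (K / 2) ^ 2 by ring,
            Real.sqrt_sq (by linarith : (0:ℝ) ≤ K / 2)]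
end

section
/- The boundary condition ∂u/∂x₂ - (a/(2√π)) ∂²u/∂x₁² = 0 at x₂ = 0 applied to u = U e^{ik(x₁-ct)-kγx₂} with γ = √(1-c²/c₂²), U ≠ 0, k > 0, yields the dispersion relation c/c₂ = √(1 - K²/(4π)) where K = ak, valid for 0 < K < 2√π. -/
open Real Complex

lemma deriv_exp_lin (U A b : ℂ) (y : ℝ) :
    deriv (fun y : ℝ => U * Complex.exp (A + b * y)) y
      = U * b * Complex.exp (A + b * y) := by
  have h1 : HasDerivAt (fun y : ℝ => (y : ℂ)) 1 y := by
    simpa using (hasDerivAt_id y).ofReal_comp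
  have h2 := (((h1.const_mul b).const_add A).cexp.const_mul U).deriv
  rw [h2]; ring

/-- The Gaussian-kernel refined boundary condition `∂u/∂x₂ - (a/(2√π))∂²u/∂x₁² = 0` at
`x₂ = 0`, applied to the surface-wave ansatz, yields `c/c₂ = √(1 - K²/(4π))`, `K = ak`. -/
theorem stmt_14 (a c c₂ k γ K : ℝ) (U : ℂ)
    (ha : 0 < a) (hc₂ : 0 < c₂) (hk : 0 < k) (hc : 0 < c) (hcc : c < c₂)
    (hK : K = a * k) (hK0 : 0 < K) (hK2 : K < 2 * Real.sqrt Real.pi)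
    (hγ : γ = Real.sqrt (1 - c ^ 2 / c₂ ^ 2)) (hU : U ≠ 0)
    (u : ℝ → ℝ → ℝ → ℂ)
    (hu : ∀ x₁ x₂ t : ℝ, u x₁ x₂ t =
      U * Complex.exp (Complex.I * (k * (x₁ - c * t)) - (k * γ * x₂ : ℝ)))
    (hbc : ∀ x₁ t : ℝ,
      deriv (fun y => u x₁ y t) 0 -
      (a / (2 * Real.sqrt Real.pi) : ℝ) * deriv (fun y => deriv (fun y' => u y' 0 t) y) x₁ = 0) :
    c / c₂ = Real.sqrt (1 - K ^ 2 / (4 * Real.pi)) := by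
  have hπ : (0:ℝ) < Real.sqrt Real.pi := Real.sqrt_pos.2 Real.pi_pos
  -- first term
  have e1 : (fun y => u 0 y 0) = fun y : ℝ => U * Complex.exp (0 + (-(k*γ) : ℂ) * y) := by
    funext y; rw [hu]; congr 1; push_cast; ring
  have e2 : (fun y' => u y' 0 0) = fun y : ℝ => U * Complex.exp (0 + (Complex.I * k) * y) := by
    funext y; rw [hu]; congr 1; push_cast; ring
  have d1 : deriv (fun y => u 0 y 0) 0 = U * (-(k*γ) : ℂ) := by
    rw [e1, deriv_exp_lin]; simp
  have e3 : (fun y => deriv (fun y' => u y' 0 0) y)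
      = fun y : ℝ => (U * (Complex.I * k)) * Complex.exp (0 + (Complex.I * k) * y) := by
    funext y; rw [e2, deriv_exp_lin]
  have d2 : deriv (fun y => deriv (fun y' => u y' 0 0) y) 0
      = U * (Complex.I * k) * (Complex.I * k) := by
    rw [e3, deriv_exp_lin]; simp
  have hbc00 := hbc 0 0
  rw [d1, d2] at hbc00
  have key : ((k * γ - a * k ^ 2 / (2 * Real.sqrt Real.pi) : ℝ) : ℂ) * U = 0 := by
    push_cast at hbc00 ⊢
    linear_combination -hbc00 - (a / (2 * Real.sqrt Real.pi) : ℂ) * U * (k:ℂ)^2 * Complex.I_sq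
  have hreal : k * γ - a * k ^ 2 / (2 * Real.sqrt Real.pi) = 0 := by
    rcases mul_eq_zero.1 key with h | h
    · exact_mod_cast h
    · exact absurd h hU
  have hγval : γ = K / (2 * Real.sqrt Real.pi) := by
    have h2 : k * (γ * (2 * Real.sqrt Real.pi)) = k * (a * k) := by
      have h' := hreal; field_simp at h'; linear_combination h'
    have h3 := mul_left_cancel₀ (ne_of_gt hk) h2
    rw [hK, eq_div_iff (by positivity : (2 * Real.sqrt Real.pi) ≠ 0)]
    linarith
  have h1c : (0:ℝ) ≤ 1 - c ^ 2 / c₂ ^ 2 := by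
    have : c ^ 2 / c₂ ^ 2 ≤ 1 := by
      rw [div_le_one (by positivity)]
      exact pow_le_pow_left₀ hc.le hcc.le 2
    linarith
  have hγsq : γ ^ 2 = 1 - c ^ 2 / c₂ ^ 2 := by
    rw [hγ]; exact Real.sq_sqrt h1c
  have hγsq2 : γ ^ 2 = K ^ 2 / (4 * Real.pi) := by
    rw [hγval]
    rw [div_pow, mul_pow, Real.sq_sqrt Real.pi_pos.le]
    ring
  have hfin : (c / c₂) ^ 2 = 1 - K ^ 2 / (4 * Real.pi) := by
    rw [div_pow, ← hγsq2, hγsq]; ring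
  rw [← hfin, Real.sqrt_sq (by positivity)]
end
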